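/- Let d ≥ 1, M ≥ 0, c₀ > 0, θ_c > 0. Let D : ℝ^{d×d} → ℝ^{d×d} be a linear map such that D(A) is symmetric for every A, D is self-adjoint with respect to the Frobenius inner product, and c₀ |A|² ≤ D(A) : A for every symmetric A; set Ċ := Ḟᵀ F + Fᵀ Ḟ and ξ(F, Ḟ) := D(Ċ) : Ċ. Let W : GL⁺(d) × (0, ∞) → ℝ satisfy: for each θ > 0 the map F ↦ W(F, θ) is differentiable on GL⁺(d) with Fréchet derivative represented by a matrix S(F, θ) (i.e. the derivative applied to G equals S(F, θ) : G); W(QF, θ) = W(F, θ) for all Q ∈ SO(d), F ∈ GL⁺(d), θ > 0; for each F ∈ GL⁺(d) the map θ ↦ S(F, θ) is differentiable on (0, ∞) with ‖S(F, θ)‖ ≤ M(1 + |F|) and ‖∂_θ S(F, θ)‖ ≤ M(1 + |F|) / max(θ, 1) for all θ > 0. Then for all F ∈ GL⁺(d), Ḟ ∈ ℝ^{d×d}, and θ > 0: |(S(F, θ) − S(F, θ_c)) : Ḟ| ≤ (M / √c₀) · |F⁻¹| · (1 + |F|) · min(|θ − θ_c|, 1) · ξ(F, Ḟ)^{1/2}.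 -/

import Mathlib

attribute [local instance] Matrix.frobeniusNormedAddCommGroup Matrix.frobeniusNormedSpace

open Matrix

/-!
Differentiating frame indifference `W(exp(tA) F) = W(F)` at `t = 0` along skew `A` shows that
`S Fᵀ` is symmetric. Hence `T := F⁻¹ ΔS`, with `ΔS := S(F,θ) - S(F,θ_c)`, is symmetric and
`2 ΔS : Ḟ = T : Ċ`, so `|ΔS : Ḟ| ≤ ½ |F⁻¹| |ΔS| |Ċ|`. Coercivity of `D` gives
`|Ċ| ≤ (ξ / c₀)^{1/2}`, and the mean value theorem together with the bound on `S` gives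
`|ΔS| ≤ 2 M (1 + |F|) min(|θ - θ_c|, 1)`.
-/

namespace Matrix

variable {m n : Type*} [Fintype m] [Fintype n]

theorem trace_transpose_mul_eq_sum (A B : Matrix m n ℝ) :
    trace (Aᵀ * B) = ∑ i, ∑ j, A i j * B i j := by
  simp only [trace, diag, mul_apply, transpose_apply]
  exact Finset.sum_comm

theorem abs_trace_transpose_mul_le (A B : Matrix m n ℝ) : |trace (Aᵀ * B)| ≤ ‖A‖ * ‖B‖ := by
  have := abs_real_inner_le_norm
    (WithLp.toLp 2 fun i => WithLp.toLp 2 (A i) : PiLp 2 fun _ : m => EuclideanSpace ℝ n)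
    (WithLp.toLp 2 fun i => WithLp.toLp 2 (B i))
  convert this using 2
  · simp [trace_transpose_mul_eq_sum, PiLp.inner_apply, mul_comm]
  · rfl
  · rfl

section Exp

attribute [local instance] Matrix.frobeniusNormedRing Matrix.frobeniusNormedAlgebra

open NormedSpace

variable [DecidableEq n]

theorem transpose_exp_mul_exp_of_skew {A : Matrix n n ℝ} (hA : Aᵀ = -A) :
    (exp A)ᵀ * exp A = 1 := by
  rw [← exp_transpose, hA, ← exp_add_of_commute _ _ (Commute.refl A).neg_left, neg_add_cancel,
    exp_zero]

theorem det_exp_nonneg (A : Matrix n n ℝ) : 0 ≤ (exp A).det := by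
  have h : exp A = exp ((2⁻¹ : ℝ) • A) * exp ((2⁻¹ : ℝ) • A) := by
    rw [← exp_add_of_commute _ _ (Commute.refl _), ← add_smul]
    norm_num
  rw [h, det_mul]
  exact mul_self_nonneg _

theorem det_exp_of_skew {A : Matrix n n ℝ} (hA : Aᵀ = -A) : (exp A).det = 1 := by
  have h := congrArg det (transpose_exp_mul_exp_of_skew hA)
  rw [det_mul, det_transpose, det_one, mul_self_eq_one_iff] at h
  exact h.resolve_right fun h' => by linarith [det_exp_nonneg A]

theorem _root_.HasFDerivAt.apply_skew_mul_eq_zero_of_rotation_invariant {f : Matrix n n ℝ → ℝ}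
    {L : Matrix n n ℝ →L[ℝ] ℝ} {F : Matrix n n ℝ} (hf : HasFDerivAt f L F)
    (hinv : ∀ Q : Matrix n n ℝ, Qᵀ * Q = 1 → Q.det = 1 → f (Q * F) = f F)
    {A : Matrix n n ℝ} (hA : Aᵀ = -A) : L (A * F) = 0 := by
  have hAt : ∀ t : ℝ, (t • A)ᵀ = -(t • A) := fun t => by rw [transpose_smul, hA, smul_neg]
  have hcurve := (hasDerivAt_exp_smul_const (𝕂 := ℝ) A 0).mul_const F
  rw [zero_smul, exp_zero, one_mul] at hcurve
  have hf0 : HasFDerivAt f L (exp ((0 : ℝ) • A) * F) := by simpa using hf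
  have hcomp := hf0.comp_hasDerivAt 0 hcurve
  refine hcomp.unique ((hasDerivAt_const (0 : ℝ) (f F)).congr_of_eventuallyEq
    (Filter.Eventually.of_forall fun t => ?_))
  exact hinv _ (transpose_exp_mul_exp_of_skew (hAt t)) (det_exp_of_skew (hAt t))

end Exp

theorem isSymm_of_forall_skew_trace_transpose_mul_eq_zero {X : Matrix n n ℝ}
    (h : ∀ A : Matrix n n ℝ, Aᵀ = -A → trace (Xᵀ * A) = 0) : X.IsSymm := by
  set P := X - Xᵀ with hP
  have hskew : Pᵀ = -P := by rw [hP, transpose_sub, transpose_transpose, neg_sub]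
  have hXP : trace (X * P) = -trace (Xᵀ * P) := by
    rw [← trace_transpose (X * P), transpose_mul, hskew, neg_mul, trace_neg, trace_mul_comm]
  have hPP : trace (Pᴴ * P) = 0 := by
    rw [conjTranspose_eq_transpose_of_trivial, hP, transpose_sub, transpose_transpose, sub_mul,
      trace_sub, ← hP, hXP, h P hskew]
    ring
  exact (sub_eq_zero.mp (trace_conjTranspose_mul_self_eq_zero_iff.mp hPP)).symm

theorem IsSymm.trace_transpose_mul_add {T : Matrix n n ℝ} (hT : T.IsSymm) (F G : Matrix n n ℝ) :
    trace (Tᵀ * (Gᵀ * F + Fᵀ * G)) = 2 * trace ((F * T)ᵀ * G) := by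
  have h : trace (Tᵀ * (Gᵀ * F)) = trace ((F * T)ᵀ * G) := by
    rw [← trace_transpose, transpose_mul, transpose_mul, transpose_transpose, hT.eq,
      transpose_mul, hT.eq]
    exact trace_mul_cycle _ _ _
  rw [mul_add, trace_add, h, transpose_mul, ← mul_assoc, two_mul]

variable [DecidableEq n]

theorem isSymm_mul_transpose_of_rotation_invariant {f : Matrix n n ℝ → ℝ}
    {L : Matrix n n ℝ →L[ℝ] ℝ} {S F : Matrix n n ℝ} (hf : HasFDerivAt f L F)
    (hL : ∀ G, L G = trace (Sᵀ * G))
    (hinv : ∀ Q : Matrix n n ℝ, Qᵀ * Q = 1 → Q.det = 1 → f (Q * F) = f F) :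
    (S * Fᵀ).IsSymm :=
  isSymm_of_forall_skew_trace_transpose_mul_eq_zero fun A hA => by
    rw [← hf.apply_skew_mul_eq_zero_of_rotation_invariant hinv hA, hL, transpose_mul,
      transpose_transpose, ← mul_assoc]
    exact (trace_mul_cycle _ _ _).symm

theorem isSymm_inv_mul_of_isSymm_mul_transpose {X F : Matrix n n ℝ} (hF : IsUnit F.det)
    (hX : (X * Fᵀ).IsSymm) : (F⁻¹ * X).IsSymm := by
  have h : F⁻¹ * X = F⁻¹ * (X * Fᵀ) * F⁻¹ᵀ := by
    rw [mul_assoc F⁻¹ (X * Fᵀ), mul_assoc X, ← transpose_mul, nonsing_inv_mul F hF, transpose_one,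
      mul_one]
  rw [h, IsSymm, transpose_mul, transpose_mul, transpose_transpose, hX.eq]
  exact (mul_assoc _ _ _).symm

theorem abs_trace_transpose_mul_le_of_isSymm_mul_transpose {X F : Matrix n n ℝ}
    (hF : IsUnit F.det) (hX : (X * Fᵀ).IsSymm) (G : Matrix n n ℝ) :
    |trace (Xᵀ * G)| ≤ ‖F⁻¹‖ * (‖X‖ / 2) * ‖Gᵀ * F + Fᵀ * G‖ := by
  have hT := isSymm_inv_mul_of_isSymm_mul_transpose hF hX
  have hFT : F * (F⁻¹ * X) = X := by rw [← mul_assoc, mul_nonsing_inv F hF, one_mul]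
  have h2 := hT.trace_transpose_mul_add F G
  rw [hFT] at h2
  calc |trace (Xᵀ * G)| = |trace ((F⁻¹ * X)ᵀ * (Gᵀ * F + Fᵀ * G))| / 2 := by
        rw [h2, abs_mul, abs_two]; ring
    _ ≤ ‖F⁻¹ * X‖ * ‖Gᵀ * F + Fᵀ * G‖ / 2 := by gcongr; exact abs_trace_transpose_mul_le _ _
    _ ≤ ‖F⁻¹‖ * ‖X‖ * ‖Gᵀ * F + Fᵀ * G‖ / 2 := by gcongr; exact frobenius_norm_mul _ _
    _ = ‖F⁻¹‖ * (‖X‖ / 2) * ‖Gᵀ * F + Fᵀ * G‖ := by ring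

end Matrix

theorem norm_sub_le_two_mul_min_of_norm_le {E : Type*} [NormedAddCommGroup E] [NormedSpace ℝ E]
    {f f' : ℝ → E} {s : Set ℝ} (hs : Convex ℝ s) {B : ℝ}
    (hf : ∀ t ∈ s, HasDerivWithinAt f (f' t) s t) (hfB : ∀ t ∈ s, ‖f t‖ ≤ B)
    (hf'B : ∀ t ∈ s, ‖f' t‖ ≤ B) {x y : ℝ} (hx : x ∈ s) (hy : y ∈ s) :
    ‖f x - f y‖ ≤ 2 * B * min |x - y| 1 := by
  have hB : 0 ≤ B := (norm_nonneg _).trans (hfB x hx)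
  rcases le_total |x - y| 1 with h | h
  · have hmvt := hs.norm_image_sub_le_of_norm_hasDerivWithin_le hf hf'B hy hx
    rw [Real.norm_eq_abs] at hmvt
    rw [min_eq_left h]
    nlinarith [abs_nonneg (x - y)]
  · rw [min_eq_right h, mul_one, two_mul]
    exact (norm_sub_le _ _).trans (add_le_add (hfB x hx) (hfB y hy))

theorem le_sqrt_div_sqrt_of_mul_sq_le {x c q : ℝ} (hc : 0 < c) (h : c * x ^ 2 ≤ q) :
    x ≤ √q / √c := by
  rw [← Real.sqrt_div' _ hc.le]
  exact Real.le_sqrt_of_sq_le ((le_div_iff₀' hc).mpr h)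

theorem coupling_stress_difference_dissipation_bound_general {d : ℕ}
    (M c₀ θc : ℝ) (hM : 0 ≤ M) (hc₀ : 0 < c₀) (hθc : 0 < θc)
    (D : Matrix (Fin d) (Fin d) ℝ →ₗ[ℝ] Matrix (Fin d) (Fin d) ℝ)
    (hDcoerc : ∀ A : Matrix (Fin d) (Fin d) ℝ, Aᵀ = A →
      c₀ * ‖A‖ ^ 2 ≤ Matrix.trace ((D A)ᵀ * A))
    (W : Matrix (Fin d) (Fin d) ℝ → ℝ → ℝ)
    (S Sθ : Matrix (Fin d) (Fin d) ℝ → ℝ → Matrix (Fin d) (Fin d) ℝ)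
    (hframe : ∀ (Q F : Matrix (Fin d) (Fin d) ℝ) (θ : ℝ),
      Qᵀ * Q = 1 → Q.det = 1 → 0 < F.det → 0 < θ → W (Q * F) θ = W F θ)
    (hS : ∀ (F : Matrix (Fin d) (Fin d) ℝ) (θ : ℝ), 0 < F.det → 0 < θ →
      ∃ L : Matrix (Fin d) (Fin d) ℝ →L[ℝ] ℝ,
        HasFDerivAt (fun X => W X θ) L F ∧
        ∀ G : Matrix (Fin d) (Fin d) ℝ, L G = Matrix.trace ((S F θ)ᵀ * G))
    (hSθ : ∀ (F : Matrix (Fin d) (Fin d) ℝ) (θ : ℝ), 0 < F.det → 0 < θ →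
      HasDerivAt (fun t => S F t) (Sθ F θ) θ)
    (hSbd : ∀ (F : Matrix (Fin d) (Fin d) ℝ) (θ : ℝ), 0 < F.det → 0 < θ →
      ‖S F θ‖ ≤ M * (1 + ‖F‖))
    (hSθbd : ∀ (F : Matrix (Fin d) (Fin d) ℝ) (θ : ℝ), 0 < F.det → 0 < θ →
      ‖Sθ F θ‖ ≤ M * (1 + ‖F‖) / max θ 1) :
    ∀ (F Fdot : Matrix (Fin d) (Fin d) ℝ) (θ : ℝ), 0 < F.det → 0 < θ →
      |Matrix.trace ((S F θ - S F θc)ᵀ * Fdot)| ≤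
        M / Real.sqrt c₀ * ‖F⁻¹‖ * (1 + ‖F‖) * min |θ - θc| 1 *
          Real.sqrt
            (Matrix.trace ((D (Fdotᵀ * F + Fᵀ * Fdot))ᵀ * (Fdotᵀ * F + Fᵀ * Fdot))) := by
  intro F Fdot θ hF hθ
  have hstress : ∀ t, 0 < t → (S F t * Fᵀ).IsSymm := fun t ht => by
    obtain ⟨L, hL, hLS⟩ := hS F t hF ht
    exact isSymm_mul_transpose_of_rotation_invariant hL hLS fun Q hQ hQdet =>
      hframe Q F t hQ hQdet hF ht
  have hdiff : ((S F θ - S F θc) * Fᵀ).IsSymm := by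
    rw [sub_mul]
    exact (hstress θ hθ).sub (hstress θc hθc)
  have hCsymm : (Fdotᵀ * F + Fᵀ * Fdot)ᵀ = Fdotᵀ * F + Fᵀ * Fdot := by
    rw [transpose_add, transpose_mul, transpose_mul, transpose_transpose, transpose_transpose,
      add_comm]
  have hC := le_sqrt_div_sqrt_of_mul_sq_le hc₀ (hDcoerc _ hCsymm)
  have hΔS : ‖S F θ - S F θc‖ ≤ 2 * (M * (1 + ‖F‖)) * min |θ - θc| 1 :=
    norm_sub_le_two_mul_min_of_norm_le (convex_Ioi 0)
      (fun t ht => (hSθ F t hF ht).hasDerivWithinAt) (fun t ht => hSbd F t hF ht)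
      (fun t ht => (hSθbd F t hF ht).trans (div_le_self (by positivity) (le_max_right t 1)))
      (Set.mem_Ioi.mpr hθ) (Set.mem_Ioi.mpr hθc)
  have hFunit : IsUnit F.det := isUnit_iff_ne_zero.mpr hF.ne'
  calc _ ≤ ‖F⁻¹‖ * (‖S F θ - S F θc‖ / 2) * ‖Fdotᵀ * F + Fᵀ * Fdot‖ :=
        abs_trace_transpose_mul_le_of_isSymm_mul_transpose hFunit hdiff Fdot
    _ ≤ ‖F⁻¹‖ * (M * (1 + ‖F‖) * min |θ - θc| 1) *
          (√(trace ((D (Fdotᵀ * F + Fᵀ * Fdot))ᵀ * (Fdotᵀ * F + Fᵀ * Fdot))) / √c₀) := by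
        gcongr
        linarith
    _ = _ := by ring

/-- If `W(·, θ)` is frame indifferent with Fréchet derivative represented by
`S(F, θ)` (Frobenius inner product), `θ ↦ S(F, θ)` is differentiable with
`‖S(F,θ)‖ ≤ M(1+|F|)` and `‖∂_θ S(F,θ)‖ ≤ M(1+|F|)/max(θ,1)`, and the
dissipation tensor `D` is symmetric-valued, self-adjoint and coercive with
constant `c₀`, then for all `F ∈ GL⁺(d)`, `Ḟ`, `θ > 0`:
`|(S(F,θ) − S(F,θ_c)) : Ḟ| ≤ (M/√c₀) |F⁻¹| (1+|F|) min(|θ−θ_c|,1) ξ(F,Ḟ)^{1/2}`. -/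
theorem coupling_stress_difference_dissipation_bound {d : ℕ} (hd : 1 ≤ d)
    (M c₀ θc : ℝ) (hM : 0 ≤ M) (hc₀ : 0 < c₀) (hθc : 0 < θc)
    (D : Matrix (Fin d) (Fin d) ℝ →ₗ[ℝ] Matrix (Fin d) (Fin d) ℝ)
    (hDsymm : ∀ A : Matrix (Fin d) (Fin d) ℝ, (D A)ᵀ = D A)
    (hDadj : ∀ A B : Matrix (Fin d) (Fin d) ℝ,
      Matrix.trace ((D A)ᵀ * B) = Matrix.trace (Aᵀ * D B))
    (hDcoerc : ∀ A : Matrix (Fin d) (Fin d) ℝ, Aᵀ = A →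
      c₀ * ‖A‖ ^ 2 ≤ Matrix.trace ((D A)ᵀ * A))
    (W : Matrix (Fin d) (Fin d) ℝ → ℝ → ℝ)
    (S Sθ : Matrix (Fin d) (Fin d) ℝ → ℝ → Matrix (Fin d) (Fin d) ℝ)
    (hframe : ∀ (Q F : Matrix (Fin d) (Fin d) ℝ) (θ : ℝ),
      Qᵀ * Q = 1 → Q.det = 1 → 0 < F.det → 0 < θ → W (Q * F) θ = W F θ)
    (hS : ∀ (F : Matrix (Fin d) (Fin d) ℝ) (θ : ℝ), 0 < F.det → 0 < θ →
      ∃ L : Matrix (Fin d) (Fin d) ℝ →L[ℝ] ℝ,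
        HasFDerivAt (fun X => W X θ) L F ∧
        ∀ G : Matrix (Fin d) (Fin d) ℝ, L G = Matrix.trace ((S F θ)ᵀ * G))
    (hSθ : ∀ (F : Matrix (Fin d) (Fin d) ℝ) (θ : ℝ), 0 < F.det → 0 < θ →
      HasDerivAt (fun t => S F t) (Sθ F θ) θ)
    (hSbd : ∀ (F : Matrix (Fin d) (Fin d) ℝ) (θ : ℝ), 0 < F.det → 0 < θ →
      ‖S F θ‖ ≤ M * (1 + ‖F‖))
    (hSθbd : ∀ (F : Matrix (Fin d) (Fin d) ℝ) (θ : ℝ), 0 < F.det → 0 < θ →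
      ‖Sθ F θ‖ ≤ M * (1 + ‖F‖) / max θ 1) :
    ∀ (F Fdot : Matrix (Fin d) (Fin d) ℝ) (θ : ℝ), 0 < F.det → 0 < θ →
      |Matrix.trace ((S F θ - S F θc)ᵀ * Fdot)| ≤
        M / Real.sqrt c₀ * ‖F⁻¹‖ * (1 + ‖F‖) * min |θ - θc| 1 *
          Real.sqrt
            (Matrix.trace ((D (Fdotᵀ * F + Fᵀ * Fdot))ᵀ * (Fdotᵀ * F + Fᵀ * Fdot))) :=
  coupling_stress_difference_dissipation_bound_general M c₀ θc hM hc₀ hθc D hDcoerc W S Sθ hframe hS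
    hSθ hSbd hSθbd
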